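/- A locally rich compact set is not porous: if E ∈ 𝒦 satisfies Tan(E,x) ≈ 𝒦 for all x ∈ E, then for no α ∈ (0,1) is E α-porous. -/
import Mathlib


open Metric Set Filter Topology

noncomputable section

/-- `d`-dimensional Euclidean space. -/
abbrev Euc (d : ℕ) := EuclideanSpace ℝ (Fin d)

/-- The cube `Q = [-1,1]^d`. -/
def cube (d : ℕ) : Set (Euc d) := {x | ∀ i, x i ∈ Set.Icc (-1 : ℝ) 1}

/-- `K ∈ 𝒦`: `K` is a nonempty compact subset of the cube `Q = [-1,1]^d`. -/
def IsKSet (d : ℕ) (K : Set (Euc d)) : Prop :=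
  K.Nonempty ∧ IsCompact K ∧ K ⊆ cube d

/-- The collection `𝒦` of nonempty compact subsets of `Q`. -/
def KColl (d : ℕ) : Set (Set (Euc d)) := {K | IsKSet d K}

/-- The zooming map `T_{x,t}(A) = {(y - x)/t : y ∈ A} ∩ Q`. -/
def zoom (d : ℕ) (x : Euc d) (t : ℝ) (A : Set (Euc d)) : Set (Euc d) :=
  ((fun y => t⁻¹ • (y - x)) '' A) ∩ cube d

/-- `F` is a tangent set of `A` at `x`: `F ∈ 𝒦` and `T_{x,t_n}(A) → F` in the Hausdorff
distance for some sequence `t_n ↓ 0`. -/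
def IsTangentSet (d : ℕ) (A : Set (Euc d)) (x : Euc d) (F : Set (Euc d)) : Prop :=
  IsKSet d F ∧ ∃ t : ℕ → ℝ, (∀ n, 0 < t n) ∧ StrictAnti t ∧ Tendsto t atTop (nhds 0) ∧
    Tendsto (fun n => hausdorffDist (zoom d x (t n) A) F) atTop (nhds 0)

/-- `Tan(A, x)`: the collection of all tangent sets of `A` at `x`. -/
def Tangents (d : ℕ) (A : Set (Euc d)) (x : Euc d) : Set (Set (Euc d)) :=
  {F | IsTangentSet d A x F}

/-- The relation `𝒜 ≲ ℬ`: there is `λ₀ > 0` such that every `A ∈ 𝒜` has, after a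
translation-and-rescaling with ratio `λ ∈ (λ₀, λ₀⁻¹)`, a matching set in `ℬ`:
`λ(A - a) = B - b` for some `B ∈ ℬ`, `a ∈ A`, `b ∈ B`. -/
def SubColl (d : ℕ) (𝒜 ℬ : Set (Set (Euc d))) : Prop :=
  ∃ lam0 : ℝ, 0 < lam0 ∧ ∀ A ∈ 𝒜, ∃ B ∈ ℬ, ∃ lam : ℝ, lam0 < lam ∧ lam < lam0⁻¹ ∧
    ∃ a ∈ A, ∃ b ∈ B, (fun y => lam • (y - a)) '' A = (fun y => y - b) '' B

/-- The equivalence `𝒜 ≈ ℬ`, i.e. `𝒜 ≲ ℬ` and `ℬ ≲ 𝒜`. -/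
def ApproxColl (d : ℕ) (𝒜 ℬ : Set (Set (Euc d))) : Prop :=
  SubColl d 𝒜 ℬ ∧ SubColl d ℬ 𝒜

/-- `E` is locally rich: `Tan(E,x) ≈ 𝒦` for every `x ∈ E`. -/
def LocallyRich (d : ℕ) (A : Set (Euc d)) : Prop :=
  ∀ x ∈ A, ApproxColl d (Tangents d A x) (KColl d)

/-- `𝒦₀`: the nonempty compact subsets of `Q` containing the origin. -/
def KColl0 (d : ℕ) : Set (Set (Euc d)) := {K | IsKSet d K ∧ (0 : Euc d) ∈ K}

/-- `𝒦₀⁺`: the nonempty compact subsets of `Q` containing the origin and contained in the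
half-space where the first coordinate is nonnegative. -/
def KColl0plus (d : ℕ) (hd : 0 < d) : Set (Set (Euc d)) :=
  {K | IsKSet d K ∧ (0 : Euc d) ∈ K ∧ ∀ x ∈ K, 0 ≤ x ⟨0, hd⟩}

/-- `A` is `α`-porous: every closed ball `B(x,r)` contains an open ball of radius `αr`
disjoint from `A`. -/
def IsPorous (d : ℕ) (α : ℝ) (A : Set (Euc d)) : Prop :=
  ∀ x : Euc d, ∀ r : ℝ, 0 < r → ∃ y : Euc d, ball y (α * r) ⊆ closedBall x r \ A

/-- Each coordinate is bounded by the Euclidean norm. -/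
lemma coord_abs_le_norm {d : ℕ} (x : Euc d) (i : Fin d) : |x i| ≤ ‖x‖ := by
  rw [EuclideanSpace.norm_eq]
  have h1 : |x i| = Real.sqrt (|x i| ^ 2) := by
    rw [Real.sqrt_sq_eq_abs, abs_abs]
  rw [h1]
  apply Real.sqrt_le_sqrt
  have := Finset.single_le_sum (f := fun j => ‖x j‖ ^ 2)
    (fun j _ => by positivity) (Finset.mem_univ i)
  simpa [Real.norm_eq_abs] using this

lemma ball_subset_cube (d : ℕ) : ball (0 : Euc d) 1 ⊆ cube d := by
  intro x hx i
  have hn : ‖x‖ < 1 := by simpa using mem_ball_zero_iff.mp hx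
  have := (coord_abs_le_norm x i).trans_lt hn
  constructor <;> [linarith [neg_abs_le (x i)]; linarith [le_abs_self (x i)]]

lemma cube_bounded (d : ℕ) : Bornology.IsBounded (cube d) := by
  apply (Metric.isBounded_closedBall (x := (0 : Euc d)) (r := Real.sqrt d)).subset
  intro x hx
  rw [mem_closedBall_zero_iff, EuclideanSpace.norm_eq]
  apply Real.sqrt_le_sqrt
  calc ∑ i, ‖x i‖ ^ 2 ≤ ∑ _i : Fin d, (1 : ℝ) := by
        apply Finset.sum_le_sum
        intro i _
        have h := hx i
        have : |x i| ≤ 1 := abs_le.mpr ⟨h.1, h.2⟩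
        calc ‖x i‖ ^ 2 = |x i| ^ 2 := by rw [Real.norm_eq_abs]
          _ ≤ 1 ^ 2 := by apply pow_le_pow_left₀ (abs_nonneg _) this
          _ = 1 := one_pow 2
    _ = d := by simp

/-- Zooms of porous sets are porous. -/
lemma zoom_porous {d : ℕ} {α : ℝ} {E : Set (Euc d)} (hpor : IsPorous d α E)
    (x : Euc d) {t : ℝ} (ht : 0 < t) : IsPorous d α (zoom d x t E) := by
  intro x₀ r hr
  obtain ⟨y, hy⟩ := hpor (x + t • x₀) (t * r) (by positivity)
  refine ⟨t⁻¹ • (y - x), fun w hw => ?_⟩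
  have hzy : dist (x + t • w) y = t * dist w (t⁻¹ • (y - x)) := by
    rw [dist_eq_norm, dist_eq_norm, ← norm_smul_of_nonneg ht.le]
    congr 1
    rw [smul_sub, smul_smul, mul_inv_cancel₀ ht.ne', one_smul]
    abel
  have hz : x + t • w ∈ closedBall (x + t • x₀) (t * r) \ E := by
    apply hy
    rw [mem_ball, hzy]
    calc t * dist w (t⁻¹ • (y - x)) < t * (α * r) :=
          mul_lt_mul_of_pos_left (mem_ball.mp hw) ht
      _ = α * (t * r) := by ring
  constructor
  · rw [mem_closedBall]
    have hd1 : dist (x + t • w) (x + t • x₀) = t * dist w x₀ := by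
      rw [dist_eq_norm, dist_eq_norm, ← norm_smul_of_nonneg ht.le]
      congr 1
      rw [smul_sub]
      abel
    have := mem_closedBall.mp hz.1
    rw [hd1] at this
    exact le_of_mul_le_mul_left (by linarith) ht
  · intro hwZ
    obtain ⟨⟨e, he, hew⟩, _⟩ := hwZ
    apply hz.2
    have : x + t • w = e := by
      rw [← hew, smul_smul, mul_inv_cancel₀ ht.ne', one_smul]
      abel
    rwa [this]

/-- A locally rich compact set `E ⊆ Q` is not `α`-porous for any `α ∈ (0,1)`. -/
theorem locally_rich_not_porous (d : ℕ) (hd : 0 < d) (E : Set (Euc d)) (hE : IsKSet d E)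
    (hrich : ∀ x ∈ E, ApproxColl d (Tangents d E x) (KColl d)) :
    ∀ α : ℝ, 0 < α → α < 1 → ¬ IsPorous d α E := by
  intro α hα0 hα1 hpor
  obtain ⟨x, hx⟩ := hE.1
  obtain ⟨lam0, hlam0, hsub⟩ := (hrich x hx).2
  -- the cube itself belongs to 𝒦
  have hcube0 : (0 : Euc d) ∈ cube d := fun i => by norm_num
  have hclosed : IsClosed (cube d) := by
    have hrw : cube d = ⋂ i, (fun x : Euc d => x i) ⁻¹' Set.Icc (-1 : ℝ) 1 := by
      ext z; simp [cube]
    rw [hrw]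
    exact isClosed_iInter fun i =>
      isClosed_Icc.preimage (EuclideanSpace.proj (𝕜 := ℝ) i).continuous
  have hcubeK : cube d ∈ KColl d :=
    ⟨⟨0, hcube0⟩, Metric.isCompact_of_isClosed_isBounded hclosed (cube_bounded d),
      subset_rfl⟩
  obtain ⟨F, hF, lam, hlam_lo, _, a, _, b, _, himg⟩ := hsub (cube d) hcubeK
  have hlam : 0 < lam := hlam0.trans hlam_lo
  obtain ⟨hFK, t, htpos, _, _, htend⟩ := hF
  -- F contains a ball of radius lam
  have hballF : ball (b - lam • a) lam ⊆ F := by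
    intro w hw
    set v : Euc d := lam⁻¹ • (w - (b - lam • a)) with hv_def
    have hv : v ∈ cube d := by
      apply ball_subset_cube
      rw [mem_ball_zero_iff, hv_def, norm_smul, Real.norm_eq_abs,
        abs_of_pos (inv_pos.mpr hlam)]
      have hwc : ‖w - (b - lam • a)‖ < lam := mem_ball_iff_norm.mp hw
      calc lam⁻¹ * ‖w - (b - lam • a)‖ < lam⁻¹ * lam :=
            mul_lt_mul_of_pos_left hwc (inv_pos.mpr hlam)
        _ = 1 := inv_mul_cancel₀ hlam.ne'
    have hmem : lam • (v - a) ∈ (fun y => lam • (y - a)) '' cube d := ⟨v, hv, rfl⟩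
    rw [himg] at hmem
    obtain ⟨z, hz, hzw⟩ := hmem
    have h1 : lam • (v - a) = w - b := by
      rw [hv_def, smul_sub, smul_smul, mul_inv_cancel₀ hlam.ne', one_smul]
      abel
    have : z = w := by
      have h2 : z - b = w - b := by rw [← h1]; exact hzw
      have := sub_left_injective (G := Euc d) h2
      exact this
    rwa [← this]
  -- pick a zoom Hausdorff-close to F
  have hε : (0 : ℝ) < α * lam / 4 := by positivity
  obtain ⟨n, hn⟩ := (htend.eventually_lt_const hε).exists
  set Z := zoom d x (t n) E with hZ_def
  have hZpor : IsPorous d α Z := zoom_porous hpor x (htpos n)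
  obtain ⟨y, hy⟩ := hZpor (b - lam • a) (lam / 2) (by positivity)
  have hy_self : y ∈ ball y (α * (lam / 2)) := mem_ball_self (by positivity)
  have hyF : y ∈ F := by
    apply hballF
    have h3 := mem_closedBall.mp (hy hy_self).1
    rw [mem_ball]
    linarith
  have hZne : Z.Nonempty :=
    ⟨0, ⟨x, hx, by simp⟩, hcube0⟩
  have hne_top : EMetric.hausdorffEdist F Z ≠ ⊤ :=
    Metric.hausdorffEdist_ne_top_of_nonempty_of_bounded hFK.1 hZne
      ((cube_bounded d).subset hFK.2.2)
      ((cube_bounded d).subset inter_subset_right)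
  have hdist : Metric.hausdorffDist F Z < α * lam / 4 := by
    rw [Metric.hausdorffDist_comm]; exact hn
  obtain ⟨z, hzZ, hz⟩ := Metric.exists_dist_lt_of_hausdorffDist_lt hyF hdist hne_top
  have hzball : z ∈ ball y (α * (lam / 2)) := by
    rw [mem_ball, dist_comm]
    linarith
  exact (hy hzball).2 hzZ

end
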